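/- Duality principle (Lemma 4.3): For every b ∈ ℝ, every α > 0, and every z ∈ H, setting w = (z−1)/(z+1) one has w ∈ H and W_b(w;α) = W_{1−b}(z;α). In particular W₁((z−1)/(z+1);α) = W₀(z;α) and W₀((z−1)/(z+1);α) = W₁(z;α). -/

import Mathlib

/-!
Write `w = (z - 1)/(z + 1)`, so that `Im w = 2 Im z / |z + 1|²`. Both Gaussian sums defining
`W_κ` transform into each other under `z ↦ w`: `m (w + 1) + 2n = 2((m + n) z + n)/(z + 1)` and
`m w + n = ((m + n)(z + 1) - 2m)/(z + 1)`, so after the unimodular changes of summation variables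
`(m, n) ↦ (m + n, n)` and `(m, n) ↦ (m + n, -m)` the first sum at `w` is the second sum at `z` and
vice versa: the weights `1 - κ` and `κ` trade places. Splitting `W_κ` into the two sums needs
their convergence, which follows from `|m u + n|² ≥ c (m² + n²)` for `Im u > 0`.
-/

open scoped Real

noncomputable section

/-- The Gaussian energy `W_κ(z;α)`. -/
def latW (κ α : ℝ) (z : ℂ) : ℝ :=
  ∑' p : {p : ℤ × ℤ // p ≠ 0},
    ((1 - κ) * Real.exp (-(α * Real.pi / (2 * z.im)) *
        ‖(p.1.1 : ℂ) * (z + 1) + 2 * (p.1.2 : ℂ)‖ ^ 2)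
      + κ * Real.exp (-(α * Real.pi / z.im) *
        ‖(p.1.1 : ℂ) * z + (p.1.2 : ℂ)‖ ^ 2))

open Real

namespace LatW

lemma summable_exp_neg_mul_int_sq {a : ℝ} (ha : 0 < a) :
    Summable fun n : ℤ => exp (-a * n ^ 2) :=
  (summable_pow_mul_jacobiTheta₂_term_bound 0 (div_pos ha pi_pos) 0).congr fun n => by
    field_simp; ring_nf

lemma sq_add_sq_le_mul_norm_sq {u : ℂ} (hu : 0 < u.im) (m n : ℝ) :
    m ^ 2 + n ^ 2 ≤ (2 + (2 * u.re ^ 2 + 1) / u.im ^ 2) * ‖(m : ℂ) * u + n‖ ^ 2 := by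
  have hnorm : ‖(m : ℂ) * u + n‖ ^ 2 = (m * u.re + n) ^ 2 + (m * u.im) ^ 2 := by
    rw [Complex.sq_norm, Complex.normSq_apply]
    simp only [Complex.add_re, Complex.add_im, Complex.mul_re, Complex.mul_im, Complex.ofReal_re,
      Complex.ofReal_im]
    ring
  have hm : (2 * u.re ^ 2 + 1) * m ^ 2 = (2 * u.re ^ 2 + 1) / u.im ^ 2 * (m * u.im) ^ 2 := by
    field_simp
  have hn : n ^ 2 ≤ 2 * (m * u.re + n) ^ 2 + 2 * u.re ^ 2 * m ^ 2 := by
    nlinarith [sq_nonneg (m * u.re + n + m * u.re)]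
  have hK : 0 ≤ (2 * u.re ^ 2 + 1) / u.im ^ 2 := by positivity
  rw [hnorm]
  nlinarith [mul_nonneg hK (sq_nonneg (m * u.re + n)), sq_nonneg (m * u.im)]

lemma summable_exp_neg_mul_norm_sq {u : ℂ} (hu : 0 < u.im) {c : ℝ} (hc : 0 < c) :
    Summable fun p : ℤ × ℤ => exp (-c * ‖(p.1 : ℂ) * u + p.2‖ ^ 2) := by
  set K := 2 + (2 * u.re ^ 2 + 1) / u.im ^ 2
  have hK : 0 < K := by positivity
  have hg := (summable_exp_neg_mul_int_sq (div_pos hc hK)).mul_of_nonneg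
    (summable_exp_neg_mul_int_sq (div_pos hc hK)) (fun _ => (exp_pos _).le)
    (fun _ => (exp_pos _).le)
  refine hg.of_nonneg_of_le (fun _ => (exp_pos _).le) fun p => ?_
  rw [← exp_add, exp_le_exp]
  have := sq_add_sq_le_mul_norm_sq hu p.1 p.2
  push_cast at this
  have h := mul_le_mul_of_nonneg_left this (div_pos hc hK).le
  rw [← mul_assoc, div_mul_cancel₀ _ hK.ne'] at h
  linarith

lemma tsum_ne_zero_comp_addEquiv {G H α : Type*} [AddZeroClass G] [AddZeroClass H]
    [AddCommMonoid α] [TopologicalSpace α] (e : G ≃+ H) (f : H → α) :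
    ∑' p : {p : G // p ≠ 0}, f (e p) = ∑' q : {q : H // q ≠ 0}, f q :=
  (e.toEquiv.subtypeEquiv (p := (· ≠ 0)) (q := (· ≠ 0)) fun p => by simp).tsum_eq
    fun q => f q

def shear : ℤ × ℤ ≃+ ℤ × ℤ where
  toFun p := (p.1 + p.2, p.2)
  invFun p := (p.1 - p.2, p.2)
  left_inv _ := by simp
  right_inv _ := by simp
  map_add' _ _ := by ext <;> simp only [Prod.fst_add, Prod.snd_add]; ring

def shearRot : ℤ × ℤ ≃+ ℤ × ℤ where
  toFun p := (p.1 + p.2, -p.1)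
  invFun p := (-p.2, p.1 + p.2)
  left_inv _ := by simp
  right_inv _ := by simp
  map_add' _ _ := by ext <;> simp only [Prod.fst_add, Prod.snd_add, neg_add]; ring

variable (α : ℝ) (z : ℂ)

def termA (p : ℤ × ℤ) : ℝ := exp (-(α * π / (2 * z.im)) * ‖(p.1 : ℂ) * (z + 1) + 2 * p.2‖ ^ 2)

def termB (p : ℤ × ℤ) : ℝ := exp (-(α * π / z.im) * ‖(p.1 : ℂ) * z + p.2‖ ^ 2)

variable {α z}

lemma summable_termB (hα : 0 < α) (hz : 0 < z.im) : Summable (termB α z) :=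
  summable_exp_neg_mul_norm_sq hz (by positivity)

lemma summable_termA (hα : 0 < α) (hz : 0 < z.im) : Summable (termA α z) := by
  have hu : 0 < ((z + 1) / 2).im := by simpa using hz
  refine (summable_exp_neg_mul_norm_sq hu (c := 2 * α * π / z.im) (by positivity)).congr
    fun p => ?_
  have h : (p.1 : ℂ) * (z + 1) + 2 * p.2 = 2 * (p.1 * ((z + 1) / 2) + p.2) := by ring
  rw [termA, h, norm_mul, Complex.norm_two]
  congr 1
  field_simp

lemma latW_eq_add (κ : ℝ) (hα : 0 < α) (hz : 0 < z.im) :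
    latW κ α z = (1 - κ) * ∑' p : {p : ℤ × ℤ // p ≠ 0}, termA α z p
      + κ * ∑' p : {p : ℤ × ℤ // p ≠ 0}, termB α z p := by
  have hA : Summable fun p : {p : ℤ × ℤ // p ≠ 0} => (1 - κ) * termA α z p :=
    ((summable_termA hα hz).subtype _).mul_left _
  have hB : Summable fun p : {p : ℤ × ℤ // p ≠ 0} => κ * termB α z p :=
    ((summable_termB hα hz).subtype _).mul_left _
  rw [← tsum_mul_left, ← tsum_mul_left]
  exact hA.tsum_add hB

lemma im_sub_one_div_add_one :
    ((z - 1) / (z + 1)).im = 2 * z.im / Complex.normSq (z + 1) := by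
  rw [Complex.div_im]
  simp only [Complex.sub_re, Complex.sub_im, Complex.add_re, Complex.add_im, Complex.one_re,
    Complex.one_im]
  ring

lemma add_one_ne_zero_of_im_pos (hz : 0 < z.im) : z + 1 ≠ 0 := by
  intro h
  have := congrArg Complex.im h
  simp only [Complex.add_im, Complex.one_im, add_zero, Complex.zero_im] at this
  exact hz.ne' this

lemma im_sub_one_div_add_one_pos (hz : 0 < z.im) : 0 < ((z - 1) / (z + 1)).im := by
  have hz1 : z + 1 ≠ 0 := add_one_ne_zero_of_im_pos hz
  rw [im_sub_one_div_add_one]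
  exact div_pos (by positivity) (Complex.normSq_pos.mpr hz1)

lemma termA_sub_one_div_add_one (hz : 0 < z.im) (p : ℤ × ℤ) :
    termA α ((z - 1) / (z + 1)) p = termB α z (shear p) := by
  obtain ⟨m, n⟩ := p
  have hz1 : z + 1 ≠ 0 := add_one_ne_zero_of_im_pos hz
  have h : (m : ℂ) * ((z - 1) / (z + 1) + 1) + 2 * n
      = 2 * (((m + n : ℤ) : ℂ) * z + n) / (z + 1) := by
    field_simp
    push_cast
    ring
  simp only [termA, termB, shear, AddEquiv.coe_mk, Equiv.coe_fn_mk]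
  rw [h, norm_div, norm_mul, Complex.norm_two, div_pow, mul_pow, im_sub_one_div_add_one,
    ← Complex.sq_norm]
  field_simp

lemma termB_sub_one_div_add_one (hz : 0 < z.im) (p : ℤ × ℤ) :
    termB α ((z - 1) / (z + 1)) p = termA α z (shearRot p) := by
  obtain ⟨m, n⟩ := p
  have hz1 : z + 1 ≠ 0 := add_one_ne_zero_of_im_pos hz
  have h : (m : ℂ) * ((z - 1) / (z + 1)) + n
      = (((m + n : ℤ) : ℂ) * (z + 1) + 2 * ((-m : ℤ) : ℂ)) / (z + 1) := by
    field_simp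
    push_cast
    ring
  simp only [termA, termB, shearRot, AddEquiv.coe_mk, Equiv.coe_fn_mk]
  rw [h, norm_div, div_pow, im_sub_one_div_add_one, ← Complex.sq_norm]
  field_simp

lemma latW_sub_one_div_add_one (κ : ℝ) (hα : 0 < α) (hz : 0 < z.im) :
    latW κ α ((z - 1) / (z + 1)) = latW (1 - κ) α z := by
  have hA : ∑' p : {p : ℤ × ℤ // p ≠ 0}, termA α ((z - 1) / (z + 1)) p
      = ∑' p : {p : ℤ × ℤ // p ≠ 0}, termB α z p := by
    simp_rw [termA_sub_one_div_add_one hz]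
    exact tsum_ne_zero_comp_addEquiv shear _
  have hB : ∑' p : {p : ℤ × ℤ // p ≠ 0}, termB α ((z - 1) / (z + 1)) p
      = ∑' p : {p : ℤ × ℤ // p ≠ 0}, termA α z p := by
    simp_rw [termB_sub_one_div_add_one hz]
    exact tsum_ne_zero_comp_addEquiv shearRot _
  rw [latW_eq_add κ hα (im_sub_one_div_add_one_pos hz), latW_eq_add _ hα hz, hA, hB]
  ring

end LatW

open LatW in
/-- **Duality principle** (Lemma 4.3): under `w = (z−1)/(z+1)` one has `w ∈ H` and
`W_b(w;α) = W_{1−b}(z;α)`; in particular `W₁(w;α) = W₀(z;α)` and `W₀(w;α) = W₁(z;α)`. -/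
theorem latW_duality (b α : ℝ) (hα : 0 < α) (z : ℂ) (hz : 0 < z.im) :
    0 < ((z - 1) / (z + 1)).im ∧
    latW b α ((z - 1) / (z + 1)) = latW (1 - b) α z ∧
    latW 1 α ((z - 1) / (z + 1)) = latW 0 α z ∧
    latW 0 α ((z - 1) / (z + 1)) = latW 1 α z := by
  refine ⟨im_sub_one_div_add_one_pos hz, latW_sub_one_div_add_one b hα hz, ?_, ?_⟩
  · simpa using latW_sub_one_div_add_one 1 hα hz
  · simpa using latW_sub_one_div_add_one 0 hα hz
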